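/- arXiv:2302.05748 — 5 statements merged into one kernel-verified Lean document; each statement's English description precedes it below -/
import Mathlib

section
/- Let p be a prime, u ∈ 1 + 2pZ_p, and let ζ_n be a primitive p^n-th root of unity in an algebraic closure of Q_p (with ζ_0 = 1). Let Φ_m(T) = Σ_{t=0}^{p−1} T^{t p^{m−1}} be the p^m-th cyclotomic polynomial evaluated at T. Then for m ≥ 1: if m < n, ord_p(Φ_m(u ζ_n)) = (p^m − p^{m−1})/(p^n − p^{n−1}); and if m > n, ord_p(Φ_m(u ζ_n)) = 1. -/
/-!
Put `x = uζ`. Since `p = Φ_{p^n}(1) = ∏ (1 - μ)` over the primitive `p^n`-th roots `μ`, and the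
elements `1 - μ` are associates of `1 - ζ`, `ord (1 - ζ) = 1 / φ(p^n)`. For `k < n`,
`x^{p^k} - 1 = u^{p^k} (ζ^{p^k} - 1) + (u^{p^k} - 1)` where `ζ^{p^k}` is a primitive
`p^{n-k}`-th root of unity and `ord (u^{p^k} - 1) ≥ k + 1 > 1 / φ(p^{n-k})`, so
`ord (x^{p^k} - 1) = 1 / φ(p^{n-k})`; the case `m < n` follows from
`Φ_m(x) (x^{p^{m-1}} - 1) = x^{p^m} - 1`. If `m > n` then `ζ^{p^{m-1}} = 1`, and
`Φ_m(x) = ∑_{t<p} v^t` with `v = u^{p^{m-1}} ≡ 1 mod 2p` is `p` times a `p`-adic unit; for `p = 2`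
this needs `v ≡ 1 mod 4`, which is why `u ∈ 1 + 2pℤ_p`.
-/

open Finset

/-- Only the values at nonzero elements are constrained; `ord 0` is junk. -/
structure IsRatValuation {K : Type*} [Field K] (ord : K → ℚ) : Prop where
  map_mul : ∀ x y : K, x ≠ 0 → y ≠ 0 → ord (x * y) = ord x + ord y
  min_le_map_add : ∀ x y : K, x ≠ 0 → y ≠ 0 → x + y ≠ 0 → min (ord x) (ord y) ≤ ord (x + y)

namespace IsRatValuation

variable {K : Type*} [Field K] {ord : K → ℚ} (hv : IsRatValuation ord)
include hv

theorem map_one : ord 1 = 0 := by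
  have h := hv.map_mul 1 1 one_ne_zero one_ne_zero
  rw [mul_one] at h
  linarith

theorem map_pow {x : K} (hx : x ≠ 0) (k : ℕ) : ord (x ^ k) = k * ord x := by
  induction k with
  | zero => simp [hv.map_one]
  | succ k ih =>
    rw [pow_succ, hv.map_mul _ _ (pow_ne_zero _ hx) hx, ih]
    push_cast
    ring

theorem map_eq_zero_of_pow_eq_one {x : K} {N : ℕ} (hN : N ≠ 0) (h : x ^ N = 1) : ord x = 0 := by
  have hx : x ≠ 0 := by
    rintro rfl
    simp [zero_pow hN] at h
  have := hv.map_pow hx N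
  rw [h, hv.map_one] at this
  have hN' : (N : ℚ) ≠ 0 := Nat.cast_ne_zero.2 hN
  exact (mul_eq_zero.1 this.symm).resolve_left hN'

theorem map_neg {x : K} (hx : x ≠ 0) : ord (-x) = ord x := by
  have h : ord (-1 : K) = 0 := hv.map_eq_zero_of_pow_eq_one two_ne_zero (by norm_num)
  rw [neg_eq_neg_one_mul, hv.map_mul _ _ (by norm_num) hx, h, zero_add]

theorem map_prod {ι : Type*} (s : Finset ι) {f : ι → K} (hf : ∀ i ∈ s, f i ≠ 0) :
    ord (∏ i ∈ s, f i) = ∑ i ∈ s, ord (f i) := by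
  classical
  induction s using Finset.induction_on with
  | empty => simp [hv.map_one]
  | insert a s ha ih =>
    rw [prod_insert ha, sum_insert ha,
      hv.map_mul _ _ (hf a (mem_insert_self a s))
        (prod_ne_zero_iff.2 fun i hi => hf i (mem_insert_of_mem hi)),
      ih fun i hi => hf i (mem_insert_of_mem hi)]

theorem le_map_sum {ι : Type*} (s : Finset ι) {f : ι → K} {c : ℚ} (hf : ∀ i ∈ s, f i ≠ 0)
    (hc : ∀ i ∈ s, c ≤ ord (f i)) (hs : ∑ i ∈ s, f i ≠ 0) : c ≤ ord (∑ i ∈ s, f i) := by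
  classical
  induction s using Finset.induction_on with
  | empty => simp at hs
  | insert a s ha ih =>
    rw [sum_insert ha] at hs ⊢
    by_cases h0 : ∑ i ∈ s, f i = 0
    · rw [h0, add_zero]
      exact hc a (mem_insert_self a s)
    · refine le_trans (le_min (hc a (mem_insert_self a s)) ?_)
        (hv.min_le_map_add _ _ (hf a (mem_insert_self a s)) h0 hs)
      exact ih (fun i hi => hf i (mem_insert_of_mem hi))
        (fun i hi => hc i (mem_insert_of_mem hi)) h0

theorem add_ne_zero_of_lt {x y : K} (hx : x ≠ 0) (h : ord x < ord y) : x + y ≠ 0 := by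
  intro h0
  rw [eq_neg_of_add_eq_zero_right h0, hv.map_neg hx] at h
  exact lt_irrefl _ h

theorem map_add_eq_of_lt {x y : K} (hx : x ≠ 0) (hy : y ≠ 0) (h : ord x < ord y) :
    ord (x + y) = ord x := by
  have hxy := hv.add_ne_zero_of_lt hx h
  refine le_antisymm ?_ (min_eq_left h.le ▸ hv.min_le_map_add x y hx hy hxy)
  by_contra! hlt
  have := hv.min_le_map_add (x + y) (-y) hxy (neg_ne_zero.2 hy) (by simpa using hx)
  rw [add_neg_cancel_right, hv.map_neg hy] at this
  exact (lt_min hlt h).not_ge this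

theorem map_geom_sum {y : K} (N : ℕ) (hy : y - 1 ≠ 0) (hyN : y ^ N - 1 ≠ 0) :
    ord (∑ t ∈ range N, y ^ t) = ord (y ^ N - 1) - ord (y - 1) := by
  have h := geom_sum_mul y N
  have hS : ∑ t ∈ range N, y ^ t ≠ 0 := left_ne_zero_of_mul (h ▸ hyN)
  rw [← h, hv.map_mul _ _ hS hy]
  ring

theorem map_one_sub_le_one_sub_pow {ζ : K} {N : ℕ} (hN : N ≠ 0) (hζ : ζ ^ N = 1) {i : ℕ}
    (hi : ζ ^ i ≠ 1) : ord (1 - ζ) ≤ ord (1 - ζ ^ i) := by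
  have hζ0 : ζ ≠ 0 := by
    rintro rfl
    simp [zero_pow hN] at hζ
  have hfactor : 1 - ζ ^ i = (∑ k ∈ range i, ζ ^ k) * (1 - ζ) := by
    rw [← neg_sub, ← geom_sum_mul, ← neg_sub ζ, mul_neg]
  have hprod : (∑ k ∈ range i, ζ ^ k) * (1 - ζ) ≠ 0 := hfactor ▸ sub_ne_zero.2 (Ne.symm hi)
  have hS := left_ne_zero_of_mul hprod
  have hS_nonneg : 0 ≤ ord (∑ k ∈ range i, ζ ^ k) :=
    hv.le_map_sum _ (fun k _ => pow_ne_zero k hζ0)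
      (fun k _ => (hv.map_eq_zero_of_pow_eq_one hN
        (by rw [← pow_mul, mul_comm, pow_mul, hζ, one_pow])).ge) hS
  rw [hfactor, hv.map_mul _ _ hS (right_ne_zero_of_mul hprod)]
  linarith

theorem map_one_sub_of_isPrimitiveRoot {p : ℕ} [Fact p.Prime] (hp : ord (p : K) = 1) {n : ℕ}
    (hn : n ≠ 0) {ζ : K} (hζ : IsPrimitiveRoot ζ (p ^ n)) :
    ord (1 - ζ) = 1 / (p ^ n).totient := by
  have hpn : 1 < p ^ n := Nat.one_lt_pow hn (Fact.out : p.Prime).one_lt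
  have hroots : ∀ μ ∈ primitiveRoots (p ^ n) K, IsPrimitiveRoot μ (p ^ n) :=
    fun μ hμ => (mem_primitiveRoots (by omega)).1 hμ
  have hne : ∀ μ ∈ primitiveRoots (p ^ n) K, (1 : K) - μ ≠ 0 :=
    fun μ hμ => sub_ne_zero.2 ((hroots μ hμ).ne_one hpn).symm
  have hsame : ∀ μ ∈ primitiveRoots (p ^ n) K, ord (1 - μ) = ord (1 - ζ) := by
    intro μ hμ
    have hμ := hroots μ hμ
    obtain ⟨i, -, rfl⟩ := hζ.eq_pow_of_pow_eq_one hμ.pow_eq_one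
    obtain ⟨j, -, hj⟩ := hμ.eq_pow_of_pow_eq_one hζ.pow_eq_one
    refine le_antisymm ?_ (hv.map_one_sub_le_one_sub_pow (by omega) hζ.pow_eq_one (hμ.ne_one hpn))
    have := hv.map_one_sub_le_one_sub_pow (by omega) hμ.pow_eq_one (i := j)
      (by rw [hj]; exact hζ.ne_one hpn)
    rwa [hj] at this
  have hprod : (p : K) = ∏ μ ∈ primitiveRoots (p ^ n) K, (1 - μ) := by
    obtain ⟨k, rfl⟩ := Nat.exists_eq_succ_of_ne_zero hn
    rw [← Polynomial.eval_one_cyclotomic_prime_pow (R := K) k,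
      Polynomial.cyclotomic_eq_prod_X_sub_primitiveRoots hζ, Polynomial.eval_prod]
    simp
  have h := hv.map_prod _ hne
  rw [← hprod, hp, sum_congr rfl hsame, sum_const, hζ.card_primitiveRoots, nsmul_eq_mul] at h
  have hφ : (0 : ℚ) < (p ^ n).totient := by exact_mod_cast Nat.totient_pos.2 (by omega)
  rw [eq_div_iff hφ.ne']
  linarith

theorem map_mul_sub_one {y z : K} (hy0 : y ≠ 0) (hy : ord y = 0) (hz : z ≠ 1)
    (h : y ≠ 1 → ord (z - 1) < ord (y - 1)) :
    y * z - 1 ≠ 0 ∧ ord (y * z - 1) = ord (z - 1) := by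
  have hz1 : z - 1 ≠ 0 := sub_ne_zero.2 hz
  have hyz : y * (z - 1) ≠ 0 := mul_ne_zero hy0 hz1
  have hord : ord (y * (z - 1)) = ord (z - 1) := by rw [hv.map_mul _ _ hy0 hz1, hy, zero_add]
  by_cases hy1 : y = 1
  · subst hy1
    simpa using hz1
  · have hlt : ord (y * (z - 1)) < ord (y - 1) := hord ▸ h hy1
    rw [show y * z - 1 = y * (z - 1) + (y - 1) by ring,
      hv.map_add_eq_of_lt hyz (sub_ne_zero.2 hy1) hlt, hord]
    exact ⟨hv.add_ne_zero_of_lt hyz hlt, rfl⟩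

end IsRatValuation

theorem exists_geom_sum_eq_mul_one_add {R : Type*} [CommRing R] {p : ℕ} (hp : p.Prime) {x : R}
    (hx : (2 * p : R) ∣ x - 1) : ∃ c, ∑ i ∈ range p, x ^ i = p * (1 + p * c) := by
  obtain ⟨b, hb⟩ := hx
  obtain rfl : x = 1 + p * (2 * b) := by linear_combination hb
  rcases hp.eq_two_or_odd' with rfl | hodd
  · exact ⟨b, by simp [sum_range_succ]; ring⟩
  · obtain ⟨c, hc⟩ := odd_sq_dvd_geom_sum₂_sub (R := R) 1 (2 * b) hodd
    exact ⟨c, by simp only [one_pow, mul_one] at hc; linear_combination hc⟩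

theorem one_div_totient_prime_pow_lt {p : ℕ} (hp : p.Prime) {d k : ℕ} (h : k ≠ 0 ∨ 2 ≤ d) :
    1 / ((p ^ d).totient : ℚ) < k + 1 := by
  have hpos : 0 < (p ^ d).totient := Nat.totient_pos.2 (pow_pos hp.pos d)
  have hlt : 1 < (k + 1) * (p ^ d).totient := by
    rcases h with hk | hd
    · nlinarith [Nat.one_le_iff_ne_zero.2 hk]
    · have h4 : 4 ≤ p ^ d :=
        (Nat.pow_le_pow_left hp.two_le 2).trans (Nat.pow_le_pow_right hp.pos hd)
      have h1 : (p ^ d).totient ≠ 1 := fun h1 => by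
        rcases Nat.totient_eq_one_iff.1 h1 with h | h <;> omega
      have h2 : 2 ≤ (p ^ d).totient := by omega
      nlinarith
  rw [div_lt_iff₀ (by exact_mod_cast hpos)]
  exact_mod_cast hlt

theorem one_div_totient_sub_one_div_totient {p : ℕ} (hp : p.Prime) {k n : ℕ} (hkn : k + 1 < n) :
    1 / ((p ^ (n - (k + 1))).totient : ℚ) - 1 / (p ^ (n - k)).totient =
      ((p : ℚ) ^ (k + 1) - p ^ k) / (p ^ n - p ^ (n - 1)) := by
  obtain ⟨d, rfl⟩ : ∃ d, n = k + d + 2 := ⟨n - k - 2, by omega⟩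
  rw [show k + d + 2 - (k + 1) = d + 1 by omega, show k + d + 2 - k = d + 1 + 1 by omega,
    show k + d + 2 - 1 = k + d + 1 by omega, Nat.totient_prime_pow_succ hp,
    Nat.totient_prime_pow_succ hp]
  have hp1 : (1 : ℚ) < p := by exact_mod_cast hp.one_lt
  have hp1' : (p : ℚ) - 1 ≠ 0 := by linarith
  have hpd : (p : ℚ) ^ d ≠ 0 := pow_ne_zero _ (by linarith)
  have hden : (p : ℚ) ^ (k + d + 2) - p ^ (k + d + 1) ≠ 0 := by
    rw [show (p : ℚ) ^ (k + d + 2) - p ^ (k + d + 1) = p ^ (k + d + 1) * (p - 1) by ring]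
    exact mul_ne_zero (pow_ne_zero _ (by linarith)) hp1'
  have hpd1 : (p : ℚ) ^ (d + 1) ≠ 0 := pow_ne_zero _ (by linarith)
  push_cast [Nat.cast_sub hp.one_le]
  rw [div_sub_div _ _ (mul_ne_zero hpd hp1') (mul_ne_zero hpd1 hp1'),
    div_eq_div_iff (mul_ne_zero (mul_ne_zero hpd hp1') (mul_ne_zero hpd1 hp1')) hden]
  ring

theorem PadicInt.isUnit_of_p_dvd_sub_one {p : ℕ} [Fact p.Prime] {x : ℤ_[p]}
    (hx : (p : ℤ_[p]) ∣ x - 1) : IsUnit x := by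
  rw [← IsLocalRing.notMem_maximalIdeal, PadicInt.maximalIdeal_eq_span_p,
    Ideal.mem_span_singleton]
  intro h
  exact PadicInt.p_nonunit (isUnit_of_dvd_one (by simpa using dvd_sub h hx))

theorem PadicInt.valuation_eq_zero_of_isUnit {p : ℕ} [Fact p.Prime] {x : ℤ_[p]} (hx : IsUnit x) :
    x.valuation = 0 := by
  obtain ⟨y, hxy⟩ := hx.exists_right_inv
  have h := PadicInt.valuation_mul hx.ne_zero (right_ne_zero_of_mul_eq_one hxy)
  rw [hxy, PadicInt.valuation_one] at h
  omega

section PadicExtension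

variable {p : ℕ} [Fact p.Prime] {K : Type*} [Field K] [Algebra ℚ_[p] K] {ord : K → ℚ}
  (hext : ∀ x : ℚ_[p], x ≠ 0 → ord (algebraMap ℚ_[p] K x) = (x.valuation : ℚ))
include hext

theorem map_algebraMap_padicInt {x : ℤ_[p]} (hx : x ≠ 0) :
    ord (algebraMap ℚ_[p] K x) = x.valuation := by
  rw [hext _ (PadicInt.coe_ne_zero.2 hx), PadicInt.valuation_coe]
  norm_cast

theorem map_natCast_prime : ord (p : K) = 1 := by
  simpa using map_algebraMap_padicInt hext (x := (p : ℤ_[p])) (NeZero.ne _)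

theorem le_map_algebraMap_of_pow_dvd {x : ℤ_[p]} (hx : x ≠ 0) {j : ℕ}
    (h : (p : ℤ_[p]) ^ j ∣ x) : (j : ℚ) ≤ ord (algebraMap ℚ_[p] K x) := by
  rw [map_algebraMap_padicInt hext hx]
  exact_mod_cast (PadicInt.mem_span_pow_iff_le_valuation x hx j).1 (Ideal.mem_span_singleton.2 h)

theorem map_algebraMap_of_isUnit {x : ℤ_[p]} (hx : IsUnit x) : ord (algebraMap ℚ_[p] K x) = 0 := by
  rw [map_algebraMap_padicInt hext hx.ne_zero, PadicInt.valuation_eq_zero_of_isUnit hx]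
  rfl

theorem map_algebraMap_geom_sum {v : ℤ_[p]} (hv : (2 * p : ℤ_[p]) ∣ v - 1) :
    ord (algebraMap ℚ_[p] K (∑ i ∈ range p, v ^ i : ℤ_[p])) = 1 := by
  obtain ⟨c, hc⟩ := exists_geom_sum_eq_mul_one_add Fact.out hv
  have hunit : IsUnit (1 + p * c : ℤ_[p]) := PadicInt.isUnit_of_p_dvd_sub_one ⟨c, by ring⟩
  rw [hc, map_algebraMap_padicInt hext (mul_ne_zero (NeZero.ne _) hunit.ne_zero),
    PadicInt.valuation_mul (NeZero.ne _) hunit.ne_zero, PadicInt.valuation_p,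
    PadicInt.valuation_eq_zero_of_isUnit hunit]
  rfl

theorem map_mul_pow_prime_pow_sub_one (hv : IsRatValuation ord) {u : ℤ_[p]}
    (hu : (p : ℤ_[p]) ∣ u - 1) {n : ℕ} {ζ : K} (hζ : IsPrimitiveRoot ζ (p ^ n)) {k : ℕ}
    (hkn : k < n) (hk : k ≠ 0 ∨ k + 2 ≤ n) :
    (algebraMap ℚ_[p] K u * ζ) ^ p ^ k - 1 ≠ 0 ∧
      ord ((algebraMap ℚ_[p] K u * ζ) ^ p ^ k - 1) = 1 / (p ^ (n - k)).totient := by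
  have hp : p.Prime := Fact.out
  have hζk : IsPrimitiveRoot (ζ ^ p ^ k) (p ^ (n - k)) :=
    hζ.pow (pow_pos hp.pos n) (by rw [← pow_add]; congr 1; omega)
  have hζk1 : ζ ^ p ^ k ≠ 1 := hζk.ne_one (Nat.one_lt_pow (by omega) hp.one_lt)
  have hord : ord (ζ ^ p ^ k - 1) = 1 / (p ^ (n - k)).totient := by
    rw [← neg_sub, hv.map_neg (sub_ne_zero.2 hζk1.symm),
      hv.map_one_sub_of_isPrimitiveRoot (map_natCast_prime hext) (by omega) hζk]
  have hunit : IsUnit (u ^ p ^ k) := (PadicInt.isUnit_of_p_dvd_sub_one hu).pow _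
  have hdvd : (p : ℤ_[p]) ^ (k + 1) ∣ u ^ p ^ k - 1 := by
    simpa using dvd_sub_pow_of_dvd_sub hu k
  have hcast : (algebraMap ℚ_[p] K u) ^ p ^ k = algebraMap ℚ_[p] K (u ^ p ^ k : ℤ_[p]) := by
    push_cast
    rfl
  rw [← hord, mul_pow, hcast]
  refine hv.map_mul_sub_one ((map_ne_zero _).2 (PadicInt.coe_ne_zero.2 hunit.ne_zero))
    (map_algebraMap_of_isUnit hext hunit) hζk1 fun h1 => ?_
  have hne : u ^ p ^ k - 1 ≠ 0 := fun h0 => h1 (by rw [sub_eq_zero.1 h0]; simp)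
  have hsub : algebraMap ℚ_[p] K (u ^ p ^ k : ℤ_[p]) - 1 =
      algebraMap ℚ_[p] K (u ^ p ^ k - 1 : ℤ_[p]) := by
    rw [PadicInt.coe_sub, PadicInt.coe_one, map_sub, map_one]
  rw [hord, hsub]
  calc 1 / ((p ^ (n - k)).totient : ℚ) < k + 1 := one_div_totient_prime_pow_lt hp (by omega)
    _ ≤ ord (algebraMap ℚ_[p] K (u ^ p ^ k - 1 : ℤ_[p])) := by
      exact_mod_cast le_map_algebraMap_of_pow_dvd hext hne hdvd

end PadicExtension

theorem stmt_1_general (p : ℕ) [Fact p.Prime]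
    (K : Type) [Field K] [Algebra ℚ_[p] K]
    (ord : K → ℚ)
    (hmul : ∀ x y : K, x ≠ 0 → y ≠ 0 → ord (x * y) = ord x + ord y)
    (hadd : ∀ x y : K, x ≠ 0 → y ≠ 0 → x + y ≠ 0 → min (ord x) (ord y) ≤ ord (x + y))
    (hext : ∀ x : ℚ_[p], x ≠ 0 → ord (algebraMap ℚ_[p] K x) = (x.valuation : ℚ))
    (u : ℤ_[p]) (hu : ∃ t : ℤ_[p], u = 1 + 2 * p * t)
    (n : ℕ) (ζ : K) (hζ : IsPrimitiveRoot ζ (p ^ n))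
    (m : ℕ) (hm : 1 ≤ m) :
    (m < n →
      ord (∑ t ∈ Finset.range p,
          (algebraMap ℚ_[p] K (u : ℚ_[p]) * ζ) ^ (t * p ^ (m - 1))) =
        ((p : ℚ) ^ m - (p : ℚ) ^ (m - 1)) / ((p : ℚ) ^ n - (p : ℚ) ^ (n - 1))) ∧
    (n < m →
      ord (∑ t ∈ Finset.range p,
          (algebraMap ℚ_[p] K (u : ℚ_[p]) * ζ) ^ (t * p ^ (m - 1))) = 1) := by
  have hv : IsRatValuation ord := ⟨hmul, hadd⟩
  obtain ⟨t, rfl⟩ := hu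
  have hu2 : (2 * p : ℤ_[p]) ∣ 1 + 2 * p * t - 1 := ⟨t, by ring⟩
  have hu1 : (p : ℤ_[p]) ∣ 1 + 2 * p * t - 1 := (dvd_mul_left _ _).trans hu2
  obtain ⟨k, rfl⟩ : ∃ k, m = k + 1 := ⟨m - 1, by omega⟩
  simp only [Nat.add_sub_cancel, pow_mul']
  refine ⟨fun hmn => ?_, fun hnm => ?_⟩
  · obtain ⟨hne₀, hord₀⟩ :=
      map_mul_pow_prime_pow_sub_one hext hv hu1 hζ (k := k) (by omega) (by omega)
    obtain ⟨hne₁, hord₁⟩ :=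
      map_mul_pow_prime_pow_sub_one hext hv hu1 hζ hmn (Or.inl k.succ_ne_zero)
    rw [pow_succ, pow_mul] at hne₁ hord₁
    rw [hv.map_geom_sum p hne₀ hne₁, hord₀, hord₁]
    exact one_div_totient_sub_one_div_totient Fact.out hmn
  · have hζk : ζ ^ p ^ k = 1 := (hζ.pow_eq_one_iff_dvd _).2 (pow_dvd_pow p (by omega))
    convert map_algebraMap_geom_sum hext (hu2.trans (sub_one_dvd_pow_sub_one _ (p ^ k))) using 2
    rw [mul_pow, hζk, mul_one]
    simp [map_sum]

/-- Let `p` be a prime, `u ∈ 1 + 2pℤ_p`, and `ζ` a primitive `p^n`-th root of unity in an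
algebraic extension `K` of `ℚ_p` (so determined by its unique valuation `ord` extending
the `p`-adic one, normalized by `ord p = 1`).  With
`Φ_m(T) = Σ_{t=0}^{p-1} T^{t p^{m-1}}` the `p^m`-th cyclotomic polynomial: for `m ≥ 1`,
if `m < n` then `ord(Φ_m(uζ)) = (p^m - p^{m-1})/(p^n - p^{n-1})`, and if `m > n` then
`ord(Φ_m(uζ)) = 1`. -/
theorem stmt_1 (p : ℕ) [Fact p.Prime]
    (K : Type) [Field K] [Algebra ℚ_[p] K] [Algebra.IsAlgebraic ℚ_[p] K]
    (ord : K → ℚ)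
    (hmul : ∀ x y : K, x ≠ 0 → y ≠ 0 → ord (x * y) = ord x + ord y)
    (hadd : ∀ x y : K, x ≠ 0 → y ≠ 0 → x + y ≠ 0 → min (ord x) (ord y) ≤ ord (x + y))
    (hext : ∀ x : ℚ_[p], x ≠ 0 → ord (algebraMap ℚ_[p] K x) = (x.valuation : ℚ))
    (u : ℤ_[p]) (hu : ∃ t : ℤ_[p], u = 1 + 2 * p * t)
    (n : ℕ) (ζ : K) (hζ : IsPrimitiveRoot ζ (p ^ n))
    (m : ℕ) (hm : 1 ≤ m) :
    (m < n →
      ord (∑ t ∈ Finset.range p,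
          (algebraMap ℚ_[p] K (u : ℚ_[p]) * ζ) ^ (t * p ^ (m - 1))) =
        ((p : ℚ) ^ m - (p : ℚ) ^ (m - 1)) / ((p : ℚ) ^ n - (p : ℚ) ^ (n - 1))) ∧
    (n < m →
      ord (∑ t ∈ Finset.range p,
          (algebraMap ℚ_[p] K (u : ℚ_[p]) * ζ) ^ (t * p ^ (m - 1))) = 1) :=
  stmt_1_general p K ord hmul hadd hext u hu n ζ hζ m hm
end

section
/- Let p be prime, n ≥ 1, and for N ≥ 0 write R(N) = N mod (p^n − p^{n−1}) and Q(N) = ⌊N/(p^n − p^{n−1})⌋. With c_N^{(i)} the ω_n-division terms as above, for every N ≥ 0: ord_p(c_N^{(i)}) ≥ Q(N) + 2 for 0 ≤ i ≤ R(N) + p^{n−1} − 1; ord_p(c_N^{(R(N)+p^{n−1})}) = Q(N) + 1; and ord_p(c_N^{(i)}) ≥ Q(N) + 1 for R(N) + p^{n−1} + 1 ≤ i ≤ p^n − 1. -/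
/-
Write `m = p^n - p^{n-1}` and `v = v_p`. Kummer's theorem gives `v(c_0^{(j)}) = n - v(j) ≥ 1`,
and `≥ 2` unless `p^{n-1} ∣ j`. Feeding this into the recursion, induction on `N` gives the
uniform bound `v(c_N^{(i)}) ≥ ⌊(N + p^n - 1 - i)/m⌋ + 1`, which contains the first and third
claims; in particular `v(c_N^{(p^n-1)}) ≥ Q(N) + 1`. For `i < p^{n-1}` only non-multiples of
`p^{n-1}` ever enter, which sharpens this to `v(c_N^{(i)}) ≥ ⌊(N + m - i)/m⌋ + 2`.

The exact valuation at `i = R(N) + p^{n-1}` then propagates along `N`: if `R` does not wrap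
around, `c_{N+1}^{(i+1)} = c_N^{(i)} + (multiple of p^{Q+2})`; if it wraps to `0`, then
`i = p^n - 1` and `c_{N+1}^{(p^{n-1})} = (multiple of p^{Q+3}) + c_N^{(p^n-1)} c_0^{(p^{n-1})}`,
of valuation `(Q + 1) + 1`.
-/

/-- Base case of the `ω_n`-division terms: `c_0^{(i)} = -C(p^n, i)` for `1 ≤ i ≤ p^n - 1`,
and `c_0^{(i)} = 0` for `i ≤ 0` (and for `i > p^n - 1`, which never occurs). -/
def c0 (p n : ℕ) (i : ℤ) : ℤ :=
  if 1 ≤ i ∧ i ≤ (p : ℤ) ^ n - 1 then -((p ^ n).choose i.toNat : ℤ) else 0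

/-- The `ω_n`-division terms `c_N^{(i)}`, defined recursively by
`c_N^{(i)} = c_{N-1}^{(i-1)} + c_{N-1}^{(p^n-1)} c_0^{(i)}`. -/
def cdiv (p n : ℕ) : ℕ → ℤ → ℤ
  | 0, i => c0 p n i
  | N + 1, i => cdiv p n N (i - 1) + cdiv p n N ((p : ℤ) ^ n - 1) * c0 p n i

lemma cdiv_zero (p n : ℕ) (i : ℤ) : cdiv p n 0 i = c0 p n i := rfl

lemma cdiv_succ (p n N : ℕ) (i : ℤ) :
    cdiv p n (N + 1) i = cdiv p n N (i - 1) + cdiv p n N ((p : ℤ) ^ n - 1) * c0 p n i := rfl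

lemma c0_of_nonpos (p n : ℕ) {i : ℤ} (hi : i ≤ 0) : c0 p n i = 0 :=
  if_neg fun h => by omega

lemma cdiv_of_nonpos (p n N : ℕ) {i : ℤ} (hi : i ≤ 0) : cdiv p n N i = 0 := by
  induction N generalizing i with
  | zero => exact c0_of_nonpos p n hi
  | succ N ih => rw [cdiv_succ, ih (by omega), c0_of_nonpos p n hi, mul_zero, add_zero]

lemma cdiv_succ_natCast {p : ℕ} (hp : 0 < p) (n N : ℕ) {i : ℕ} (hi : 1 ≤ i) :
    cdiv p n (N + 1) i = cdiv p n N ↑(i - 1) + cdiv p n N ↑(p ^ n - 1) * c0 p n i := by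
  rw [cdiv_succ, Nat.cast_sub hi, Nat.cast_sub (Nat.one_le_pow _ _ hp)]
  push_cast
  rfl

section BinomialValuation

variable {p n i : ℕ}

lemma c0_natCast (h1 : 1 ≤ i) (h2 : i < p ^ n) : c0 p n i = -((p ^ n).choose i : ℤ) := by
  have : (i : ℤ) < (p : ℤ) ^ n := by exact_mod_cast h2
  rw [c0, if_pos ⟨by omega, by omega⟩, Int.toNat_natCast]

lemma emultiplicity_c0 (hp : p.Prime) (h1 : 1 ≤ i) (h2 : i < p ^ n) :
    emultiplicity (p : ℤ) (c0 p n i) = ↑(n - multiplicity p i) := by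
  rw [c0_natCast h1 h2, emultiplicity_neg, Int.natCast_emultiplicity,
    hp.emultiplicity_choose_prime_pow h2.le (by omega)]

lemma multiplicity_lt_of_lt_pow (hi : 0 < i) (h : i < p ^ n) : multiplicity p i < n := by
  by_contra! hn
  exact (Nat.le_of_dvd hi ((pow_dvd_pow p hn).trans (pow_multiplicity_dvd p i))).not_gt h

lemma multiplicity_add_one_lt_of_not_dvd (h : ¬p ^ (n - 1) ∣ i) : multiplicity p i + 1 < n := by
  by_contra! hn
  exact h ((pow_dvd_pow p (by omega)).trans (pow_multiplicity_dvd p i))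

lemma pow_dvd_c0 (hp : p.Prime) (h1 : 1 ≤ i) (h2 : i < p ^ n) {k : ℕ}
    (hk : k + multiplicity p i ≤ n) : (p : ℤ) ^ k ∣ c0 p n i := by
  rw [pow_dvd_iff_le_emultiplicity, emultiplicity_c0 hp h1 h2]
  exact_mod_cast (by omega : k ≤ n - multiplicity p i)

lemma prime_dvd_c0 (hp : p.Prime) (h1 : 1 ≤ i) (h2 : i < p ^ n) : (p : ℤ) ∣ c0 p n i := by
  simpa using pow_dvd_c0 (k := 1) hp h1 h2 (by have := multiplicity_lt_of_lt_pow h1 h2; omega)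

lemma sq_dvd_c0 (hp : p.Prime) (h1 : 1 ≤ i) (h2 : i < p ^ n) (h : ¬p ^ (n - 1) ∣ i) :
    (p : ℤ) ^ 2 ∣ c0 p n i :=
  pow_dvd_c0 hp h1 h2 (by have := multiplicity_add_one_lt_of_not_dvd h; omega)

lemma emultiplicity_c0_pow_pred (hp : p.Prime) (hn : 1 ≤ n) :
    emultiplicity (p : ℤ) (c0 p n ↑(p ^ (n - 1))) = 1 := by
  rw [emultiplicity_c0 hp (Nat.one_le_pow _ _ hp.pos) (Nat.pow_lt_pow_right hp.one_lt (by omega)),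
    multiplicity_pow_self_of_prime hp.prime, show n - (n - 1) = 1 by omega, Nat.cast_one]

end BinomialValuation

lemma emultiplicity_add_eq_of_pow_dvd {α : Type*} [Ring α] {p a b : α} {k : ℕ}
    (ha : p ^ (k + 1) ∣ a) (hb : emultiplicity p b = k) : emultiplicity p (a + b) = k := by
  have hlt : (k : ℕ∞) < emultiplicity p a :=
    (ENat.natCast_lt_natCast.2 k.lt_succ_self).trans_le (pow_dvd_iff_le_emultiplicity.1 ha)
  rw [emultiplicity_add_of_gt (hb ▸ hlt), hb]

section Valuation

variable {p n m : ℕ}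

theorem pow_dvd_cdiv (hp : p.Prime) (hm : m + p ^ (n - 1) = p ^ n) (hpm : p ^ (n - 1) ≤ m)
    (N : ℕ) {i : ℕ} (h1 : 1 ≤ i) (h2 : i < p ^ n) :
    (p : ℤ) ^ ((N + p ^ n - 1 - i) / m + 1) ∣ cdiv p n N i := by
  have hm0 : 0 < m := by have := Nat.one_le_pow (n - 1) p hp.pos; omega
  induction N generalizing i with
  | zero =>
    rw [cdiv_zero]
    by_cases hdvd : p ^ (n - 1) ∣ i
    · have hle := Nat.le_of_dvd h1 hdvd
      rw [Nat.div_eq_of_lt (by omega), zero_add, pow_one]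
      exact prime_dvd_c0 hp h1 h2
    · have : (0 + p ^ n - 1 - i) / m < 2 := (Nat.div_lt_iff_lt_mul hm0).2 (by omega)
      exact (pow_dvd_pow _ (by omega)).trans (sq_dvd_c0 hp h1 h2 hdvd)
  | succ N ih =>
    have htop : (p : ℤ) ^ (N / m + 1) ∣ cdiv p n N ↑(p ^ n - 1) := by
      simpa [show N + p ^ n - 1 - (p ^ n - 1) = N by omega] using
        ih (i := p ^ n - 1) (by omega) (by omega)
    rw [cdiv_succ_natCast hp.pos _ _ h1]
    refine dvd_add ?_ ?_
    · rcases h1.eq_or_lt with rfl | h1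
      · simp [cdiv_of_nonpos]
      · simpa [show N + p ^ n - 1 - (i - 1) = N + 1 + p ^ n - 1 - i by omega] using
          ih (i := i - 1) (by omega) (by omega)
    · by_cases hdvd : p ^ (n - 1) ∣ i
      · have hle := Nat.le_of_dvd h1 hdvd
        have : (N + 1 + p ^ n - 1 - i) / m ≤ N / m + 1 := by
          rw [← Nat.add_div_right _ hm0]; exact Nat.div_le_div_right (by omega)
        have hprod : (p : ℤ) ^ (N / m + 1 + 1) ∣ cdiv p n N ↑(p ^ n - 1) * c0 p n i := by
          rw [pow_succ]; exact mul_dvd_mul htop (prime_dvd_c0 hp h1 h2)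
        exact (pow_dvd_pow _ (by omega)).trans hprod
      · have : (N + 1 + p ^ n - 1 - i) / m ≤ N / m + 2 := by
          rw [show N / m + 2 = (N + m + m) / m by simp [Nat.add_div_right _ hm0]]
          exact Nat.div_le_div_right (by omega)
        have hprod : (p : ℤ) ^ (N / m + 1 + 2) ∣ cdiv p n N ↑(p ^ n - 1) * c0 p n i := by
          rw [pow_add]; exact mul_dvd_mul htop (sq_dvd_c0 hp h1 h2 hdvd)
        exact (pow_dvd_pow _ (by omega)).trans hprod

theorem pow_dvd_cdiv_top (hp : p.Prime) (hm : m + p ^ (n - 1) = p ^ n) (hpm : p ^ (n - 1) ≤ m)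
    (N : ℕ) : (p : ℤ) ^ (N / m + 1) ∣ cdiv p n N ↑(p ^ n - 1) := by
  have h1 : 1 ≤ p ^ (n - 1) := Nat.one_le_pow _ _ hp.pos
  simpa [show N + p ^ n - 1 - (p ^ n - 1) = N by omega] using
    pow_dvd_cdiv hp hm hpm N (i := p ^ n - 1) (by omega) (by omega)

theorem pow_dvd_cdiv_of_lt_pow_pred (hp : p.Prime) (hm : m + p ^ (n - 1) = p ^ n)
    (hpm : p ^ (n - 1) ≤ m) (N : ℕ) {i : ℕ} (h1 : 1 ≤ i) (h2 : i < p ^ (n - 1)) :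
    (p : ℤ) ^ ((N + m - i) / m + 2) ∣ cdiv p n N i := by
  have hm0 : 0 < m := by omega
  induction N generalizing i with
  | zero =>
    have hi : ¬p ^ (n - 1) ∣ i := fun h => (Nat.le_of_dvd h1 h).not_gt h2
    rw [Nat.div_eq_of_lt (by omega), cdiv_zero]
    exact sq_dvd_c0 hp h1 (by omega) hi
  | succ N ih =>
    have hi : ¬p ^ (n - 1) ∣ i := fun h => (Nat.le_of_dvd h1 h).not_gt h2
    rw [cdiv_succ_natCast hp.pos _ _ h1]
    refine dvd_add ?_ ?_
    · rcases h1.eq_or_lt with rfl | h1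
      · simp [cdiv_of_nonpos]
      · simpa [show N + m - (i - 1) = N + 1 + m - i by omega] using
          ih (i := i - 1) (by omega) (by omega)
    · have : (N + 1 + m - i) / m ≤ N / m + 1 := by
        rw [← Nat.add_div_right _ hm0]; exact Nat.div_le_div_right (by omega)
      have hprod : (p : ℤ) ^ (N / m + 1 + 2) ∣ cdiv p n N ↑(p ^ n - 1) * c0 p n i := by
        rw [pow_add]
        exact mul_dvd_mul (pow_dvd_cdiv_top hp hm hpm N) (sq_dvd_c0 hp h1 (by omega) hi)
      exact (pow_dvd_pow _ (by omega)).trans hprod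

theorem emultiplicity_cdiv (hp : p.Prime) (hm : m + p ^ (n - 1) = p ^ n) (hpm : p ^ (n - 1) ≤ m)
    (N : ℕ) : emultiplicity (p : ℤ) (cdiv p n N ↑(N % m + p ^ (n - 1))) = ↑(N / m + 1) := by
  have hpow : 1 ≤ p ^ (n - 1) := Nat.one_le_pow _ _ hp.pos
  have hm0 : 0 < m := by omega
  have hn : 1 ≤ n :=
    Nat.pos_of_ne_zero (by rintro rfl; simp only [zero_tsub, pow_zero] at hm hpm; omega)
  induction N with
  | zero => simpa [cdiv_zero] using emultiplicity_c0_pow_pred hp hn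
  | succ N ih =>
    have hN := Nat.mod_add_div N m
    obtain hlt | heq : N % m + 1 < m ∨ N % m + 1 = m := by have := Nat.mod_lt N hm0; omega
    · obtain ⟨hq, hr⟩ : (N + 1) / m = N / m ∧ (N + 1) % m = N % m + 1 :=
        (Nat.div_mod_unique hm0).2 ⟨by omega, hlt⟩
      rw [hq, hr, cdiv_succ_natCast hp.pos _ _ (by omega),
        show N % m + 1 + p ^ (n - 1) - 1 = N % m + p ^ (n - 1) by omega, add_comm]
      refine emultiplicity_add_eq_of_pow_dvd ?_ ih
      rw [pow_succ]
      exact mul_dvd_mul (pow_dvd_cdiv_top hp hm hpm N) (prime_dvd_c0 hp (by omega) (by omega))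
    · obtain ⟨hq, hr⟩ : (N + 1) / m = N / m + 1 ∧ (N + 1) % m = 0 :=
        (Nat.div_mod_unique hm0).2 ⟨by rw [mul_add]; omega, hm0⟩
      rw [show N % m + p ^ (n - 1) = p ^ n - 1 by omega] at ih
      rw [hq, hr, zero_add, cdiv_succ_natCast hp.pos _ _ hpow]
      refine emultiplicity_add_eq_of_pow_dvd ?_ ?_
      · rcases hpow.eq_or_lt with hone | hone
        · simp [← hone, cdiv_of_nonpos]
        · have : N / m + 1 ≤ (N + m - (p ^ (n - 1) - 1)) / m :=
            (Nat.le_div_iff_mul_le hm0).2 (by rw [add_mul, one_mul, mul_comm]; omega)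
          exact (pow_dvd_pow _ (by omega)).trans
            (pow_dvd_cdiv_of_lt_pow_pred hp hm hpm N (i := p ^ (n - 1) - 1) (by omega) (by omega))
      · rw [emultiplicity_mul (Nat.prime_iff_prime_int.mp hp), ih, emultiplicity_c0_pow_pred hp hn]
        norm_cast

end Valuation

lemma pow_pred_le_pow_sub_pow_pred {p n : ℕ} (hp : 2 ≤ p) (hn : 1 ≤ n) :
    p ^ (n - 1) ≤ p ^ n - p ^ (n - 1) := by
  have : p ^ n = p ^ (n - 1) * p := by rw [← pow_succ, Nat.sub_add_cancel hn]
  have : p ^ (n - 1) * 2 ≤ p ^ (n - 1) * p := Nat.mul_le_mul_left _ hp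
  omega

/-- Valuation bounds for the `ω_n`-division terms, with `R(N)`, `Q(N)` the remainder and
quotient of `N` on division by `p^n - p^{n-1}`. -/
theorem stmt_8 (p n : ℕ) (hp : p.Prime) (hn : 1 ≤ n) (N : ℕ) :
    (∀ i : ℕ, i ≤ N % (p ^ n - p ^ (n - 1)) + p ^ (n - 1) - 1 →
      (p : ℤ) ^ (N / (p ^ n - p ^ (n - 1)) + 2) ∣ cdiv p n N (i : ℤ)) ∧
    (cdiv p n N ((N % (p ^ n - p ^ (n - 1)) + p ^ (n - 1) : ℕ) : ℤ) ≠ 0 ∧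
      padicValInt p (cdiv p n N ((N % (p ^ n - p ^ (n - 1)) + p ^ (n - 1) : ℕ) : ℤ)) =
        N / (p ^ n - p ^ (n - 1)) + 1) ∧
    (∀ i : ℕ, N % (p ^ n - p ^ (n - 1)) + p ^ (n - 1) + 1 ≤ i → i ≤ p ^ n - 1 →
      (p : ℤ) ^ (N / (p ^ n - p ^ (n - 1)) + 1) ∣ cdiv p n N (i : ℤ)) := by
  have hpm := pow_pred_le_pow_sub_pow_pred hp.two_le hn
  have hm := Nat.sub_add_cancel (Nat.pow_le_pow_right hp.pos (Nat.sub_le n 1))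
  set m := p ^ n - p ^ (n - 1)
  clear_value m
  have hm0 : 0 < m := by have := Nat.one_le_pow (n - 1) p hp.pos; omega
  have hN := Nat.mod_add_div N m
  have hR := Nat.mod_lt N hm0
  have hval := emultiplicity_cdiv hp hm hpm N
  have hne : cdiv p n N ↑(N % m + p ^ (n - 1)) ≠ 0 := by
    rintro h
    rw [h, emultiplicity_zero] at hval
    exact ENat.top_ne_natCast _ hval
  refine ⟨fun i hi => ?_, ⟨hne, ?_⟩, fun i hi1 hi2 => ?_⟩
  · rcases i.eq_zero_or_pos with rfl | h1
    · simp [cdiv_of_nonpos]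
    · have : N / m + 1 ≤ (N + p ^ n - 1 - i) / m :=
        (Nat.le_div_iff_mul_le hm0).2 (by rw [add_mul, one_mul, mul_comm]; omega)
      exact (pow_dvd_pow _ (by omega)).trans (pow_dvd_cdiv hp hm hpm N h1 (by omega))
  · rw [padicValInt.of_ne_one_ne_zero hp.ne_one hne, multiplicity_eq_of_emultiplicity_eq_some hval]
  · have : N / m ≤ (N + p ^ n - 1 - i) / m := Nat.div_le_div_right (by omega)
    exact (pow_dvd_pow _ (by omega)).trans (pow_dvd_cdiv hp hm hpm N (by omega) (by omega))
end

section
/- If F ∈ O_K[[T]] is p-large at n (as defined above) and U ∈ O_K[[T]] is a unit, then UF is also p-large at n. -/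
/-- The threshold valuations `v_i(F)` in the definition of "`p`-large at `n`". -/
def vI (p n e lam : ℕ) (mu : ℚ) (i : ℕ) : ℚ :=
  if i ≤ (lam - p ^ n) % (p ^ n - p ^ (n - 1)) + p ^ (n - 1) then
    mu + (((lam - p ^ n) / (p ^ n - p ^ (n - 1)) : ℕ) : ℚ) + 1 + 1 / (e : ℚ)
  else if i ≤ p ^ n - 1 then
    mu + (((lam - p ^ n) / (p ^ n - p ^ (n - 1)) : ℕ) : ℚ) + 1
  else if (i - p ^ n) % (p ^ n - p ^ (n - 1)) ≤ (lam - p ^ n) % (p ^ n - p ^ (n - 1)) then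
    mu + (((lam - p ^ n) / (p ^ n - p ^ (n - 1)) : ℕ) : ℚ)
      - (((i - p ^ n) / (p ^ n - p ^ (n - 1)) : ℕ) : ℚ) + 1 / (e : ℚ)
  else
    mu + (((lam - p ^ n) / (p ^ n - p ^ (n - 1)) : ℕ) : ℚ)
      - (((i - p ^ n) / (p ^ n - p ^ (n - 1)) : ℕ) : ℚ)

/-!
Each coefficient of `U * F` is `∑_{a+b=i} u_a f_b` with `v(u_a) ≥ 0`, so `v(u_a f_b) ≥ v(f_b)`, and
any lower bound valid for all `f_j` with `j ≤ i` passes to the `i`-th coefficient of `U * F`. This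
gives the bound `μ`, the strict bound below `λ` and, since the thresholds `v_i` decrease in `i`,
`p`-largeness. At `i = λ` the term `u_0 f_λ` has valuation exactly `μ` and all others exceed `μ`.
-/

theorem Nat.div_lt_div_of_lt_mod_of_mod_le {a b d r : ℕ} (hab : a ≤ b) (ha : r < a % d)
    (hb : b % d ≤ r) : a / d < b / d := by
  have ha' := Nat.div_add_mod a d
  have hb' := Nat.div_add_mod b d
  have hle : a / d ≤ b / d := Nat.div_le_div_right hab
  refine lt_of_le_of_ne hle fun h => ?_
  rw [h] at ha'
  omega

theorem vI_antitone (p n e lam : ℕ) (mu : ℚ) : Antitone (vI p n e lam mu) := by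
  intro i i' hii
  simp only [vI]
  have hε0 : (0 : ℚ) ≤ 1 / (e : ℚ) := by positivity
  have hε1 : (1 : ℚ) / (e : ℚ) ≤ 1 := by rw [one_div]; exact Nat.cast_inv_le_one e
  set P := p ^ n
  set d := P - p ^ (n - 1)
  have hq : (((i - P) / d : ℕ) : ℚ) ≤ (((i' - P) / d : ℕ) : ℚ) := by
    exact_mod_cast Nat.div_le_div_right (Nat.sub_le_sub_right hii P)
  have hq_lt : (lam - P) % d < (i - P) % d → (i' - P) % d ≤ (lam - P) % d →
      (((i - P) / d : ℕ) : ℚ) + 1 ≤ (((i' - P) / d : ℕ) : ℚ) := fun h₁ h₂ => by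
    exact_mod_cast Nat.div_lt_div_of_lt_mod_of_mod_le (Nat.sub_le_sub_right hii P) h₁ h₂
  have hq_nonneg := Nat.cast_nonneg (α := ℚ) ((i' - P) / d)
  -- Past `p ^ n`, `vI i` is a constant minus `(i - p ^ n) / d`, plus `1 / e ∈ [0, 1]` when
  -- `(i - p ^ n) % d` is small; that bonus is lost only when the quotient grows.
  split_ifs <;> first | omega | linarith | linarith [hq_lt (by omega) (by omega)]

namespace PowerSeries

open Finset

variable {R Γ : Type*} [Ring R] [LinearOrderedAddCommMonoidWithTop Γ] (w : AddValuation R Γ)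
  {U F : R⟦X⟧}

theorem le_addValuation_coeff_mul (hU : ∀ k, 0 ≤ w (coeff k U)) {i : ℕ} {c : Γ}
    (hF : ∀ j ≤ i, c ≤ w (coeff j F)) : c ≤ w (coeff i (U * F)) := by
  rw [coeff_mul]
  refine w.map_le_sum fun x hx => ?_
  rw [w.map_mul]
  exact (hF x.2 (HasAntidiagonal.antidiagonal.snd_le hx)).trans (le_add_of_nonneg_left (hU x.1))

theorem lt_addValuation_coeff_mul (hU : ∀ k, 0 ≤ w (coeff k U)) {i : ℕ} {c : Γ}
    (hF : ∀ j ≤ i, c < w (coeff j F)) : c < w (coeff i (U * F)) := by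
  rw [coeff_mul]
  refine w.map_lt_sum (hF 0 i.zero_le).ne_top fun x hx => ?_
  rw [w.map_mul]
  exact (hF x.2 (HasAntidiagonal.antidiagonal.snd_le hx)).trans_le
    (le_add_of_nonneg_left (hU x.1))

theorem addValuation_coeff_mul_of_unit (hU : ∀ k, 0 ≤ w (coeff k U)) (hU₀ : w (coeff 0 U) = 0)
    {l : ℕ} (hF : ∀ j < l, w (coeff l F) < w (coeff j F)) :
    w (coeff l (U * F)) = w (coeff l F) := by
  have hhead : w (coeff 0 U * coeff l F) = w (coeff l F) := by rw [w.map_mul, hU₀, zero_add]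
  rcases l.eq_zero_or_pos with rfl | hl
  · rw [← hhead, coeff_mul, Nat.antidiagonal_zero, sum_singleton]
  have hmem : ((0, l) : ℕ × ℕ) ∈ antidiagonal l := HasAntidiagonal.mem_antidiagonal.2 (zero_add l)
  rw [coeff_mul, ← add_sum_erase _ _ hmem, w.map_add_eq_of_lt_left, hhead]
  rw [hhead]
  refine w.map_lt_sum (hF 0 hl).ne_top fun x hx => ?_
  obtain ⟨hx0, hx⟩ := mem_erase.1 hx
  have hx2 : x.2 < l := by
    rcases x with ⟨_ | a, b⟩
    · rw [HasAntidiagonal.mem_antidiagonal, zero_add] at hx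
      exact absurd (hx ▸ rfl) hx0
    · rw [HasAntidiagonal.mem_antidiagonal] at hx
      omega
  rw [w.map_mul]
  exact (hF x.2 hx2).trans_le (le_add_of_nonneg_left (hU x.1))

end PowerSeries

theorem stmt_12_general (p n : ℕ)
    (K : Type) [Field K]
    (v : K → WithTop ℚ)
    (hv0 : ∀ x : K, v x = ⊤ ↔ x = 0)
    (hvmul : ∀ x y : K, v (x * y) = v x + v y)
    (hvadd : ∀ x y : K, min (v x) (v y) ≤ v (x + y))
    (e : ℕ)
    (F U : PowerSeries K)
    (hUint : ∀ i, (0 : WithTop ℚ) ≤ v (PowerSeries.coeff (R := K) i U))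
    (hUunit : v (PowerSeries.coeff (R := K) 0 U) = (0 : WithTop ℚ))
    (μF : ℚ) (lF : ℕ)
    (hmu : ∀ i, (μF : WithTop ℚ) ≤ v (PowerSeries.coeff (R := K) i F))
    (hmueq : v (PowerSeries.coeff (R := K) lF F) = (μF : WithTop ℚ))
    (hlam : ∀ i < lF, (μF : WithTop ℚ) < v (PowerSeries.coeff (R := K) i F))
    (hlarge : ∀ i < lF,
      ((vI p n e lF μF i : ℚ) : WithTop ℚ) ≤ v (PowerSeries.coeff (R := K) i F)) :
    (∀ i, (μF : WithTop ℚ) ≤ v (PowerSeries.coeff (R := K) i (U * F))) ∧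
    v (PowerSeries.coeff (R := K) lF (U * F)) = (μF : WithTop ℚ) ∧
    (∀ i < lF, (μF : WithTop ℚ) < v (PowerSeries.coeff (R := K) i (U * F))) ∧
    (∀ i < lF,
      ((vI p n e lF μF i : ℚ) : WithTop ℚ) ≤ v (PowerSeries.coeff (R := K) i (U * F))) := by
  have hv1 : v 1 = 0 := by
    have h := hvmul 1 1
    rw [one_mul] at h
    exact (WithTop.add_left_inj (mt (hv0 1).1 one_ne_zero)).1 (h.symm.trans (add_zero _).symm)
  let w : AddValuation K (WithTop ℚ) := AddValuation.of v ((hv0 0).2 rfl) hv1 hvadd hvmul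
  refine ⟨fun i => ?_, ?_, fun i hi => ?_, fun i hi => ?_⟩
  · exact PowerSeries.le_addValuation_coeff_mul w hUint fun j _ => hmu j
  · exact (PowerSeries.addValuation_coeff_mul_of_unit w hUint hUunit fun j hj =>
      hmueq.trans_lt (hlam j hj)).trans hmueq
  · exact PowerSeries.lt_addValuation_coeff_mul w hUint fun j hj => hlam j (by omega)
  · exact PowerSeries.le_addValuation_coeff_mul w hUint fun j hj =>
      (WithTop.coe_le_coe.2 (vI_antitone p n e lF μF hj)).trans (hlarge j (by omega))

/-- If `F ∈ O_K[[T]]` is `p`-large at `n` (invariants `μF`, `lF ≥ p^n`; coefficients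
`a_i`, `i < lF`, satisfy `v(a_i) ≥ v_i(F)`) and `U ∈ O_K[[T]]` is a unit, then `U·F` is
also `p`-large at `n` (with the same invariants `μF`, `lF`). -/
theorem stmt_12 (p n : ℕ) [Fact p.Prime] (hn : 1 ≤ n)
    (K : Type) [Field K] [Algebra ℚ_[p] K] [FiniteDimensional ℚ_[p] K]
    (v : K → WithTop ℚ)
    (hv0 : ∀ x : K, v x = ⊤ ↔ x = 0)
    (hvmul : ∀ x y : K, v (x * y) = v x + v y)
    (hvadd : ∀ x y : K, min (v x) (v y) ≤ v (x + y))
    (hvext : ∀ x : ℚ_[p], x ≠ 0 →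
      v (algebraMap ℚ_[p] K x) = ((x.valuation : ℚ) : WithTop ℚ))
    (e : ℕ) (he : 0 < e)
    (F U : PowerSeries K)
    (hFint : ∀ i, (0 : WithTop ℚ) ≤ v (PowerSeries.coeff (R := K) i F))
    (hUint : ∀ i, (0 : WithTop ℚ) ≤ v (PowerSeries.coeff (R := K) i U))
    (hUunit : v (PowerSeries.coeff (R := K) 0 U) = (0 : WithTop ℚ))
    (μF : ℚ) (lF : ℕ)
    (hmu : ∀ i, (μF : WithTop ℚ) ≤ v (PowerSeries.coeff (R := K) i F))
    (hmueq : v (PowerSeries.coeff (R := K) lF F) = (μF : WithTop ℚ))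
    (hlam : ∀ i < lF, (μF : WithTop ℚ) < v (PowerSeries.coeff (R := K) i F))
    (hbig : p ^ n ≤ lF)
    (hlarge : ∀ i < lF,
      ((vI p n e lF μF i : ℚ) : WithTop ℚ) ≤ v (PowerSeries.coeff (R := K) i F)) :
    (∀ i, (μF : WithTop ℚ) ≤ v (PowerSeries.coeff (R := K) i (U * F))) ∧
    v (PowerSeries.coeff (R := K) lF (U * F)) = (μF : WithTop ℚ) ∧
    (∀ i < lF, (μF : WithTop ℚ) < v (PowerSeries.coeff (R := K) i (U * F))) ∧
    (∀ i < lF,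
      ((vI p n e lF μF i : ℚ) : WithTop ℚ) ≤ v (PowerSeries.coeff (R := K) i (U * F))) :=
  stmt_12_general p n K v hv0 hvmul hvadd e F U hUint hUunit μF lF hmu hmueq hlam hlarge
end

section
/- Let p be an odd prime, γ a topological generator of 1 + pZ_p, k ≥ 2, n ≥ 1, and define log_{k,n}^± = ∏_{j=0}^{k−2} ∏_{1 ≤ i ≤ n, (−1)^i = ±1} Φ_i(γ^{−j}(1+T)) ∈ Z_p[T], where Φ_i(X) = (X^{p^i}−1)/(X^{p^{i−1}}−1). Then μ(log_{k,n}^±) = 0 and, with ε_{n+1} = sign((−1)^{n+1}) and q_n = Σ_{1 ≤ i ≤ n, parity of i opposite to n} (p^i − p^{i−1}), one has λ(log_{k,n}^{ε_{n+1}}) = (k−1)·q_n. -/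
open scoped Classical

/-- The factor `Φ_i(γ^{-j}(1+T))`, where `Φ_i(X) = Σ_{t<p} X^{t p^{i-1}}` is the
`p^i`-th cyclotomic polynomial, viewed in `ℤ_p[[T]]`. -/
noncomputable def PhiFactor (p : ℕ) [Fact p.Prime] (γ : ℤ_[p]ˣ) (j i : ℕ) :
    PowerSeries ℤ_[p] :=
  ∑ t ∈ Finset.range p,
    (PowerSeries.C (R := ℤ_[p]) ((γ ^ (-(j : ℤ)) : ℤ_[p]ˣ) : ℤ_[p]) *
      (1 + PowerSeries.X)) ^ (t * p ^ (i - 1))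

/-- The half-logarithm at layer `n`:
`log_{k,n}^σ = ∏_{j=0}^{k-2} ∏_{1 ≤ i ≤ n, (-1)^i = σ} Φ_i(γ^{-j}(1+T))`. -/
noncomputable def logkn (p : ℕ) [Fact p.Prime] (γ : ℤ_[p]ˣ) (k n : ℕ) (σ : ℤ) :
    PowerSeries ℤ_[p] :=
  ∏ j ∈ Finset.range (k - 1),
    ∏ i ∈ (Finset.Icc 1 n).filter (fun i => (-1 : ℤ) ^ i = σ), PhiFactor p γ j i

/-- `q_n = Σ (p^i - p^{i-1})` over `1 ≤ i ≤ n` of parity opposite to `n`. -/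
def qn (p n : ℕ) : ℕ :=
  ∑ i ∈ (Finset.Icc 1 n).filter (fun i => i % 2 ≠ n % 2), (p ^ i - p ^ (i - 1))

/-! Modulo `p`, every `γ^{-j}(1+T)` reduces to `1+T` and `Φ_i(1+T)` to `T^{p^i-p^{i-1}}`, since
`Φ_{p^i} = (X-1)^{p^i-p^{i-1}}` in characteristic `p`. Hence `log_{k,n}^σ` reduces to the single
monomial `T^{(k-1)e_σ}` with `e_σ = Σ_{1 ≤ i ≤ n, (-1)^i = σ} (p^i - p^{i-1})`, so its only unit
coefficient sits at `(k-1)e_σ`; for `σ = (-1)^{n+1}` one has `e_σ = q_n`. -/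

instance PowerSeries.charP (R : Type*) [Semiring R] (p : ℕ) [CharP R p] :
    CharP (PowerSeries R) p :=
  charP_of_injective_ringHom PowerSeries.C_injective p

theorem geom_sum_one_add_pow_eq_pow_of_charP {A : Type*} [CommRing A] (p : ℕ) [Fact p.Prime]
    [CharP A p] (x : A) {i : ℕ} (hi : 1 ≤ i) :
    ∑ t ∈ Finset.range p, (1 + x) ^ (t * p ^ (i - 1)) = x ^ (p ^ i - p ^ (i - 1)) := by
  obtain ⟨m, rfl⟩ : ∃ m, i = m + 1 := ⟨i - 1, by omega⟩
  have hp : p.Prime := Fact.out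
  have hgeom := Polynomial.cyclotomic_prime_pow_eq_geom_sum (R := A) (n := m) hp
  have hpow := Polynomial.cyclotomic_mul_prime_pow_eq A hp.not_dvd_one (Nat.succ_pos m)
  rw [mul_one, Polynomial.cyclotomic_one] at hpow
  simpa [Polynomial.eval_finsetSum, ← pow_mul, mul_comm] using
    congrArg (Polynomial.eval (1 + x)) (hgeom.symm.trans hpow)

namespace PadicInt

variable {p : ℕ} [Fact p.Prime]

theorem isUnit_iff_toZMod_ne_zero (x : ℤ_[p]) : IsUnit x ↔ toZMod x ≠ 0 := by
  rw [← IsLocalRing.notMem_maximalIdeal, ← ker_toZMod, RingHom.mem_ker]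

theorem toZMod_zpow_eq_one {u : ℤ_[p]ˣ} (hu : ‖(u : ℤ_[p]) - 1‖ < 1) (z : ℤ) :
    toZMod ((u ^ z : ℤ_[p]ˣ) : ℤ_[p]) = 1 := by
  have hsub : toZMod ((u : ℤ_[p]) - 1) = 0 := by
    rwa [← RingHom.mem_ker, ker_toZMod, IsLocalRing.mem_maximalIdeal, mem_nonunits]
  have hunit : Units.map (toZMod (p := p)).toMonoidHom u = 1 := by
    ext
    simpa [sub_eq_zero] using hsub
  change ((Units.map (toZMod (p := p)).toMonoidHom (u ^ z) : (ZMod p)ˣ) : ZMod p) = 1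
  rw [map_zpow, hunit, one_zpow, Units.val_one]

end PadicInt

section Reduction

variable {p : ℕ} [Fact p.Prime] {γ : ℤ_[p]ˣ}

theorem map_toZMod_PhiFactor (hγ : ‖(γ : ℤ_[p]) - 1‖ < 1) (j : ℕ) {i : ℕ} (hi : 1 ≤ i) :
    PowerSeries.map PadicInt.toZMod (PhiFactor p γ j i)
      = PowerSeries.X ^ (p ^ i - p ^ (i - 1)) := by
  rw [PhiFactor, map_sum, ← geom_sum_one_add_pow_eq_pow_of_charP p _ hi]
  refine Finset.sum_congr rfl fun t _ => ?_
  rw [map_pow, map_mul, PowerSeries.map_C, PadicInt.toZMod_zpow_eq_one hγ, map_add, map_one,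
    PowerSeries.map_X, map_one, one_mul]

theorem map_toZMod_logkn (hγ : ‖(γ : ℤ_[p]) - 1‖ < 1) (k n : ℕ) (σ : ℤ) :
    PowerSeries.map PadicInt.toZMod (logkn p γ k n σ)
      = PowerSeries.X ^ ((k - 1) *
          ∑ i ∈ (Finset.Icc 1 n).filter (fun i => (-1 : ℤ) ^ i = σ), (p ^ i - p ^ (i - 1))) := by
  have hinner : ∀ j, ∏ i ∈ (Finset.Icc 1 n).filter (fun i => (-1 : ℤ) ^ i = σ),
      PowerSeries.map PadicInt.toZMod (PhiFactor p γ j i)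
        = PowerSeries.X ^
          ∑ i ∈ (Finset.Icc 1 n).filter (fun i => (-1 : ℤ) ^ i = σ), (p ^ i - p ^ (i - 1)) := by
    intro j
    rw [← Finset.prod_pow_eq_pow_sum]
    refine Finset.prod_congr rfl fun i hi => map_toZMod_PhiFactor hγ j ?_
    exact (Finset.mem_Icc.mp (Finset.mem_filter.mp hi).1).1
  simp only [logkn, map_prod, hinner, Finset.prod_const, Finset.card_range, ← pow_mul,
    Nat.mul_comm]

theorem isUnit_coeff_logkn_iff (hγ : ‖(γ : ℤ_[p]) - 1‖ < 1) (k n m : ℕ) (σ : ℤ) :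
    IsUnit (PowerSeries.coeff m (logkn p γ k n σ)) ↔
      m = (k - 1) *
        ∑ i ∈ (Finset.Icc 1 n).filter (fun i => (-1 : ℤ) ^ i = σ), (p ^ i - p ^ (i - 1)) := by
  rw [PadicInt.isUnit_iff_toZMod_ne_zero, ← PowerSeries.coeff_map, map_toZMod_logkn hγ,
    PowerSeries.coeff_X_pow]
  split_ifs <;> simpa

end Reduction

theorem sum_filter_neg_one_pow_succ_eq_qn (p n : ℕ) :
    ∑ i ∈ (Finset.Icc 1 n).filter (fun i => (-1 : ℤ) ^ i = (-1) ^ (n + 1)), (p ^ i - p ^ (i - 1))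
      = qn p n := by
  refine Finset.sum_congr (Finset.filter_congr fun i _ => ?_) fun _ _ => rfl
  rw [neg_one_pow_eq_pow_mod_two, neg_one_pow_eq_pow_mod_two (n + 1)]
  rcases Nat.mod_two_eq_zero_or_one i with hi | hi <;>
    rcases Nat.mod_two_eq_zero_or_one n with hn | hn <;>
    simp [hi, hn, Nat.add_mod]

/-- `‖γ - 1‖ = p⁻¹` says that `γ` generates `1 + pℤ_p`; `μ = 0` is encoded as some coefficient
being a unit, and `λ = (k-1)q_n` as the coefficient at `(k-1)q_n` being the first unit one. -/
theorem stmt_15_general (p : ℕ) [Fact p.Prime] (k n : ℕ) (γ : ℤ_[p]ˣ)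
    (hγ : ‖(γ : ℤ_[p]) - 1‖ = (p : ℝ)⁻¹) :
    (∀ σ : ℤ, σ = 1 ∨ σ = -1 →
      ∃ i, IsUnit (PowerSeries.coeff (R := ℤ_[p]) i (logkn p γ k n σ))) ∧
    IsUnit (PowerSeries.coeff (R := ℤ_[p]) ((k - 1) * qn p n)
      (logkn p γ k n ((-1) ^ (n + 1)))) ∧
    (∀ i < (k - 1) * qn p n,
      ¬ IsUnit (PowerSeries.coeff (R := ℤ_[p]) i (logkn p γ k n ((-1) ^ (n + 1))))) := by
  have hγ_lt : ‖(γ : ℤ_[p]) - 1‖ < 1 := by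
    rw [hγ]
    exact inv_lt_one_of_one_lt₀ (by exact_mod_cast (Fact.out : p.Prime).one_lt)
  have hq := sum_filter_neg_one_pow_succ_eq_qn p n
  refine ⟨fun σ _ => ⟨_, (isUnit_coeff_logkn_iff hγ_lt k n _ σ).2 rfl⟩,
    (isUnit_coeff_logkn_iff hγ_lt k n _ _).2 (by rw [hq]), fun i hi => ?_⟩
  rw [isUnit_coeff_logkn_iff hγ_lt, hq]
  exact hi.ne

/-- For `p` odd, `γ` a topological generator of `1 + pℤ_p` (i.e. `‖γ - 1‖ = 1/p`),
`k ≥ 2` and `n ≥ 1`: `μ(log_{k,n}^±) = 0` (some coefficient is a unit, for both signs),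
and `λ(log_{k,n}^{ε_{n+1}}) = (k-1)·q_n` with `ε_{n+1} = (-1)^{n+1}` (the coefficient at
`(k-1)q_n` is a unit and no earlier coefficient is). -/
theorem stmt_15 (p : ℕ) [Fact p.Prime] (hodd : p ≠ 2) (k n : ℕ) (hk : 2 ≤ k)
    (hn : 1 ≤ n) (γ : ℤ_[p]ˣ) (hγ : ‖(γ : ℤ_[p]) - 1‖ = (p : ℝ)⁻¹) :
    (∀ σ : ℤ, σ = 1 ∨ σ = -1 →
      ∃ i, IsUnit (PowerSeries.coeff (R := ℤ_[p]) i (logkn p γ k n σ))) ∧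
    IsUnit (PowerSeries.coeff (R := ℤ_[p]) ((k - 1) * qn p n)
      (logkn p γ k n ((-1) ^ (n + 1)))) ∧
    (∀ i < (k - 1) * qn p n,
      ¬ IsUnit (PowerSeries.coeff (R := ℤ_[p]) i (logkn p γ k n ((-1) ^ (n + 1))))) :=
  stmt_15_general p k n γ hγ
end

section
/- Let K/Q_p be finite with ramification index e, F ∈ Λ_K with Weierstrass decomposition F = p^{μ}(T^{λ} + ϖ F_0)U where F_0 ∈ O_K[T] has degree < λ, ϖ is a uniformizer, and U ∈ O_K[[T]]^×. If ζ is a primitive p^n-th root of unity with λ < (p^n − p^{n−1})/e and u ∈ 1+2pZ_p, then ord_p(F(uζ − 1)) = μ + λ/(p^n − p^{n−1}). -/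
/-!
The norm of `K` extends that of `ℚ_p`, so it is ultrametric and `K` is complete. In the cyclotomic
identity `∏ (1 - ν) = Φ_{p^n}(1) = p` over the primitive `p^n`-th roots of unity all factors have
the same norm, whence `‖ζ - 1‖ = p^{-1/φ(p^n)}`; since `‖u - 1‖` is smaller, `x = uζ - 1` has the
same norm. Evaluation at `x` is multiplicative on series with integral coefficients, `‖U(x)‖ = 1`
because its constant term dominates, and the bound on `λ` says exactly that `‖ϖ‖ < ‖x‖^λ`,
so `x^λ` dominates `x^λ + ϖ F₀(x)`.
-/

open PowerSeries

abbrev NormedAlgebra.ofNormAlgebraMap {𝕜 A : Type*} [NormedField 𝕜] [SeminormedRing A]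
    [Algebra 𝕜 A] (h : ∀ c : 𝕜, ‖algebraMap 𝕜 A c‖ = ‖c‖) : NormedAlgebra 𝕜 A where
  norm_smul_le c a := by
    rw [Algebra.smul_def, ← h c]
    exact norm_mul_le _ _

theorem Nat.totient_prime_pow_eq_sub {p n : ℕ} (hp : p.Prime) (hn : 1 ≤ n) :
    (p ^ n).totient = p ^ n - p ^ (n - 1) := by
  rw [Nat.totient_prime_pow hp hn, Nat.mul_sub_one, ← pow_succ, Nat.sub_add_cancel hn]

theorem IsUltrametricDist.norm_add_eq_left_of_norm_lt {E : Type*} [SeminormedAddCommGroup E]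
    [IsUltrametricDist E] {x y : E} (h : ‖y‖ < ‖x‖) : ‖x + y‖ = ‖x‖ := by
  rw [norm_add_eq_max_of_norm_ne_norm h.ne', max_eq_left h.le]

section Ultrametric

variable {K : Type*} [NormedField K] [IsUltrametricDist K]

theorem IsUltrametricDist.norm_pow_sub_one_le {ν : K} (hν : ‖ν‖ ≤ 1) (i : ℕ) :
    ‖ν ^ i - 1‖ ≤ ‖ν - 1‖ := by
  have hsum : ‖∑ k ∈ Finset.range i, ν ^ k‖ ≤ 1 :=
    norm_sum_le_of_forall_le_of_nonneg zero_le_one fun k _ => by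
      rw [norm_pow]
      exact pow_le_one₀ (norm_nonneg _) hν
  rw [← geom_sum_mul, norm_mul]
  exact mul_le_of_le_one_left (norm_nonneg _) hsum

theorem IsUltrametricDist.norm_mul_sub_one_eq {a b : K} (hab : ‖a - 1‖ < ‖b - 1‖)
    (hb : ‖b - 1‖ ≤ 1) : ‖a * b - 1‖ = ‖b - 1‖ := by
  have ha : ‖a‖ = 1 := by
    rw [← add_sub_cancel (1 : K) a, norm_add_eq_left_of_norm_lt (by simpa using hab.trans_le hb),
      norm_one]
  rw [show a * b - 1 = a * (b - 1) + (a - 1) by ring,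
    norm_add_eq_left_of_norm_lt (by rwa [norm_mul, ha, one_mul]), norm_mul, ha, one_mul]

theorem IsPrimitiveRoot.norm_sub_one_eq {k : ℕ} (hk : k ≠ 0) {ζ ν : K}
    (hζ : IsPrimitiveRoot ζ k) (hν : IsPrimitiveRoot ν k) : ‖ν - 1‖ = ‖ζ - 1‖ := by
  have : NeZero k := ⟨hk⟩
  have key {ζ ν : K} (hζ : IsPrimitiveRoot ζ k) (hν : IsPrimitiveRoot ν k) :
      ‖ν - 1‖ ≤ ‖ζ - 1‖ := by
    obtain ⟨i, -, rfl⟩ := hζ.eq_pow_of_pow_eq_one hν.pow_eq_one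
    exact IsUltrametricDist.norm_pow_sub_one_le (hζ.isOfFinOrder hk).norm_eq_one.le i
  exact le_antisymm (key hζ hν) (key hν hζ)

theorem IsPrimitiveRoot.norm_sub_one_pow_totient {p n : ℕ} (hp : p.Prime) (hn : n ≠ 0) {ζ : K}
    (hζ : IsPrimitiveRoot ζ (p ^ n)) : ‖ζ - 1‖ ^ (p ^ n).totient = ‖(p : K)‖ := by
  have := Fact.mk hp
  obtain ⟨m, rfl⟩ := Nat.exists_eq_succ_of_ne_zero hn
  have hprod : ∏ ν ∈ primitiveRoots (p ^ (m + 1)) K, (1 - ν) = p := by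
    simpa [Polynomial.cyclotomic_eq_prod_X_sub_primitiveRoots hζ, Polynomial.eval_prod]
      using Polynomial.eval_one_cyclotomic_prime_pow (R := K) (p := p) m
  rw [← hprod, norm_prod, ← hζ.card_primitiveRoots, ← Finset.prod_const]
  refine Finset.prod_congr rfl fun ν hν => ?_
  rw [norm_sub_rev 1, hζ.norm_sub_one_eq (pow_ne_zero _ hp.ne_zero)
    (isPrimitiveRoot_of_mem_primitiveRoots hν)]

theorem IsPrimitiveRoot.norm_sub_one_eq_rpow {p n : ℕ} (hp : p.Prime) (hn : n ≠ 0)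
    (hpK : ‖(p : K)‖ = (p : ℝ)⁻¹) {ζ : K} (hζ : IsPrimitiveRoot ζ (p ^ n)) :
    ‖ζ - 1‖ = (p : ℝ) ^ (-((p ^ n).totient : ℝ)⁻¹) := by
  rw [← Real.pow_rpow_inv_natCast (norm_nonneg _) (Nat.totient_pos.mpr (pow_pos hp.pos n)).ne',
    hζ.norm_sub_one_pow_totient hp hn, hpK, Real.inv_rpow (by positivity),
    Real.rpow_neg (by positivity)]

end Ultrametric

/-- The factor `2` matters for `p = 2`, `n = 1`, where the totient is `1`. -/
theorem PadicInt.norm_coe_one_add_two_mul_sub_one_pow_totient_lt {p : ℕ} [hp : Fact p.Prime]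
    (t : ℤ_[p]) {n : ℕ} (hn : n ≠ 0) :
    ‖((1 + 2 * p * t : ℤ_[p]) : ℚ_[p]) - 1‖ ^ (p ^ n).totient < (p : ℝ)⁻¹ := by
  have hq : p - 1 ≤ (p ^ n).totient := by
    rw [Nat.totient_prime_pow hp.out (Nat.pos_of_ne_zero hn)]
    exact Nat.le_mul_of_pos_left _ (pow_pos hp.out.pos _)
  have hs : ‖((1 + 2 * p * t : ℤ_[p]) : ℚ_[p]) - 1‖ ≤ ‖(2 : ℤ_[p])‖ * (p : ℝ)⁻¹ := by
    rw [show ((1 + 2 * p * t : ℤ_[p]) : ℚ_[p]) - 1 = ((2 * p * t : ℤ_[p]) : ℚ_[p]) by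
        push_cast; ring,
      PadicInt.padic_norm_e_of_padicInt, norm_mul, norm_mul, PadicInt.norm_p]
    exact mul_le_of_le_one_right (by positivity) t.norm_le_one
  have hp1 : (p : ℝ)⁻¹ < 1 := inv_lt_one_of_one_lt₀ (by exact_mod_cast hp.out.one_lt)
  rcases eq_or_ne p 2 with rfl | hp2
  · rw [show ((2 : ℤ_[2])) = ((2 : ℕ) : ℤ_[2]) by norm_num, PadicInt.norm_p] at hs
    calc _ ≤ ‖((1 + 2 * 2 * t : ℤ_[2]) : ℚ_[2]) - 1‖ :=
          pow_le_of_le_one (norm_nonneg _) (hs.trans (by norm_num)) (by omega)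
      _ < _ := hs.trans_lt (by norm_num)
  · have hs' := hs.trans (mul_le_of_le_one_left (by positivity) (PadicInt.norm_le_one 2))
    have hp3 : 2 ≤ p - 1 := by have := hp.out.two_le; omega
    calc _ ≤ ‖((1 + 2 * p * t : ℤ_[p]) : ℚ_[p]) - 1‖ ^ 2 :=
          pow_le_pow_of_le_one (norm_nonneg _) (hs'.trans hp1.le) (by omega)
      _ ≤ ((p : ℝ)⁻¹) ^ 2 := pow_le_pow_left₀ (norm_nonneg _) hs' 2
      _ < _ := by
          rw [sq]
          exact mul_lt_of_lt_one_left (by simpa using hp.out.pos) hp1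

namespace PowerSeries

variable {K : Type*} [NormedField K]

/-- Junk value `0` when the series does not converge. -/
noncomputable def tsumEval (f : K⟦X⟧) (x : K) : K := ∑' j, coeff j f * x ^ j

theorem summable_norm_coeff_mul_pow {f : K⟦X⟧} {B : ℝ} (hf : ∀ j, ‖coeff j f‖ ≤ B) {x : K}
    (hx : ‖x‖ < 1) : Summable fun j => ‖coeff j f * x ^ j‖ := by
  refine .of_nonneg_of_le (fun j => norm_nonneg _) (fun j => ?_)
    ((summable_geometric_of_lt_one (norm_nonneg x) hx).mul_left B)
  rw [norm_mul, norm_pow]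
  exact mul_le_mul_of_nonneg_right (hf j) (by positivity)

theorem tsumEval_C_mul (a : K) (f : K⟦X⟧) (x : K) : (C a * f).tsumEval x = a * f.tsumEval x := by
  simp only [tsumEval, coeff_C_mul, mul_assoc, tsum_mul_left]

theorem tsumEval_X_pow (n : ℕ) (x : K) : (X ^ n : K⟦X⟧).tsumEval x = x ^ n := by
  rw [tsumEval, tsum_eq_single n fun j hj => by rw [coeff_X_pow, if_neg hj, zero_mul],
    coeff_X_pow, if_pos rfl, one_mul]

section Ultrametric

variable [IsUltrametricDist K]

theorem norm_coeff_X_pow_add_C_mul_le_one (n : ℕ) {ϖ : K} (hϖ : ‖ϖ‖ ≤ 1) {g : K⟦X⟧}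
    (hg : ∀ j, ‖coeff j g‖ ≤ 1) (j : ℕ) : ‖coeff j (X ^ n + C ϖ * g)‖ ≤ 1 := by
  rw [map_add, coeff_C_mul, coeff_X_pow]
  refine (IsUltrametricDist.norm_add_le_max _ _).trans (max_le ?_ ?_)
  · split_ifs <;> simp
  · rw [norm_mul]
    exact mul_le_one₀ hϖ (norm_nonneg _) (hg j)

theorem norm_tsumEval_le_one {f : K⟦X⟧} {x : K} (hf : ∀ j, ‖coeff j f‖ ≤ 1) (hx : ‖x‖ ≤ 1) :
    ‖f.tsumEval x‖ ≤ 1 :=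
  IsUltrametricDist.norm_tsum_le_of_forall_le_of_nonneg zero_le_one fun j => by
    rw [norm_mul, norm_pow]
    exact mul_le_one₀ (hf j) (by positivity) (pow_le_one₀ (norm_nonneg _) hx)

end Ultrametric

variable [CompleteSpace K] {x : K}

theorem tsumEval_add {f g : K⟦X⟧} {B C : ℝ} (hf : ∀ j, ‖coeff j f‖ ≤ B)
    (hg : ∀ j, ‖coeff j g‖ ≤ C) (hx : ‖x‖ < 1) :
    (f + g).tsumEval x = f.tsumEval x + g.tsumEval x := by
  simp only [tsumEval, map_add, add_mul]
  exact (summable_norm_coeff_mul_pow hf hx).of_norm.tsum_add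
    (summable_norm_coeff_mul_pow hg hx).of_norm

theorem tsumEval_mul {f g : K⟦X⟧} {B C : ℝ} (hf : ∀ j, ‖coeff j f‖ ≤ B)
    (hg : ∀ j, ‖coeff j g‖ ≤ C) (hx : ‖x‖ < 1) :
    (f * g).tsumEval x = f.tsumEval x * g.tsumEval x := by
  rw [tsumEval, tsumEval, tsumEval, tsum_mul_tsum_eq_tsum_sum_antidiagonal_of_summable_norm
    (summable_norm_coeff_mul_pow hf hx) (summable_norm_coeff_mul_pow hg hx)]
  refine tsum_congr fun m => ?_
  rw [coeff_mul, Finset.sum_mul]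
  refine Finset.sum_congr rfl fun kl hkl => ?_
  rw [← Finset.HasAntidiagonal.mem_antidiagonal.mp hkl, pow_add]
  ring

variable [IsUltrametricDist K]

theorem norm_tsumEval_eq_one {f : K⟦X⟧} (hf : ∀ j, ‖coeff j f‖ ≤ 1)
    (hf0 : ‖coeff 0 f‖ = 1) (hx : ‖x‖ < 1) : ‖f.tsumEval x‖ = 1 := by
  have htail : ‖∑' j, coeff (j + 1) f * x ^ (j + 1)‖ ≤ ‖x‖ :=
    IsUltrametricDist.norm_tsum_le_of_forall_le_of_nonneg (norm_nonneg x) fun j => by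
      rw [norm_mul, norm_pow]
      exact (mul_le_of_le_one_left (by positivity) (hf _)).trans
        (pow_le_of_le_one (norm_nonneg x) hx.le j.succ_ne_zero)
  rw [tsumEval, (summable_norm_coeff_mul_pow hf hx).of_norm.tsum_eq_zero_add,
    IsUltrametricDist.norm_add_eq_left_of_norm_lt] <;> simp only [pow_zero, mul_one, hf0]
  exact htail.trans_lt hx

theorem norm_tsumEval_X_pow_add_C_mul {n : ℕ} {ϖ : K} {g : K⟦X⟧}
    (hg : ∀ j, ‖coeff j g‖ ≤ 1) (hx : ‖x‖ < 1) (hϖ : ‖ϖ‖ < ‖x‖ ^ n) :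
    ‖(X ^ n + C ϖ * g).tsumEval x‖ = ‖x‖ ^ n := by
  have hgx : ‖ϖ * g.tsumEval x‖ < ‖x ^ n‖ := by
    rw [norm_mul, norm_pow]
    exact (mul_le_of_le_one_right (norm_nonneg _) (norm_tsumEval_le_one hg hx.le)).trans_lt hϖ
  rw [tsumEval_add (B := 1) (fun j => by rw [coeff_X_pow]; split_ifs <;> simp)
      (fun j => by
        rw [coeff_C_mul, norm_mul]
        exact mul_le_mul_of_nonneg_left (hg j) (norm_nonneg ϖ)) hx,
    tsumEval_X_pow, tsumEval_C_mul, IsUltrametricDist.norm_add_eq_left_of_norm_lt hgx, norm_pow]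

theorem norm_tsumEval_C_mul_X_pow_add_C_mul_mul {n : ℕ} {c ϖ : K} {g U : K⟦X⟧}
    (hg : ∀ j, ‖coeff j g‖ ≤ 1) (hU : ∀ j, ‖coeff j U‖ ≤ 1) (hU0 : ‖coeff 0 U‖ = 1)
    (hx : ‖x‖ < 1) (hϖ : ‖ϖ‖ < ‖x‖ ^ n) :
    ‖(C c * (X ^ n + C ϖ * g) * U).tsumEval x‖ = ‖c‖ * ‖x‖ ^ n := by
  have hϖ1 : ‖ϖ‖ ≤ 1 := hϖ.le.trans (pow_le_one₀ (norm_nonneg _) hx.le)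
  rw [mul_assoc, tsumEval_C_mul, tsumEval_mul (norm_coeff_X_pow_add_C_mul_le_one n hϖ1 hg) hU hx,
    norm_mul, norm_mul, norm_tsumEval_X_pow_add_C_mul hg hx hϖ, norm_tsumEval_eq_one hU hU0 hx,
    mul_one]

end PowerSeries

theorem stmt_17_general (p n : ℕ) [Fact p.Prime] (hn : 1 ≤ n)
    (K : Type) [NormedField K] [Algebra ℚ_[p] K] [FiniteDimensional ℚ_[p] K]
    (hnorm : ∀ x : ℚ_[p], ‖algebraMap ℚ_[p] K x‖ = ‖x‖)
    (e : ℕ) (he : 0 < e)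
    (ϖ : K) (hϖ : ‖ϖ‖ = (p : ℝ) ^ (-(1 / (e : ℝ))))
    (μ : ℤ) (lam : ℕ)
    (F0 : PowerSeries K)
    (hF0int : ∀ j, ‖PowerSeries.coeff (R := K) j F0‖ ≤ 1)
    (U : PowerSeries K)
    (hUint : ∀ j, ‖PowerSeries.coeff (R := K) j U‖ ≤ 1)
    (hUunit : ‖PowerSeries.coeff (R := K) 0 U‖ = 1)
    (F : PowerSeries K)
    (hF : F = PowerSeries.C (R := K) ((p : K) ^ μ) *
      (PowerSeries.X ^ lam + PowerSeries.C (R := K) ϖ * F0) * U)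
    (ζ : K) (hζ : IsPrimitiveRoot ζ (p ^ n))
    (hlam : (lam : ℝ) < ((p ^ n - p ^ (n - 1) : ℕ) : ℝ) / (e : ℝ))
    (u : ℤ_[p]) (hu : ∃ t : ℤ_[p], u = 1 + 2 * p * t) :
    ‖∑' j : ℕ, PowerSeries.coeff (R := K) j F *
        (algebraMap ℚ_[p] K (u : ℚ_[p]) * ζ - 1) ^ j‖ =
      (p : ℝ) ^ (-((μ : ℝ) + (lam : ℝ) / ((p ^ n - p ^ (n - 1) : ℕ) : ℝ))) := by
  obtain ⟨t, rfl⟩ := hu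
  let := NormedAlgebra.ofNormAlgebraMap hnorm
  have := IsUltrametricDist.of_normedAlgebra ℚ_[p] (L := K)
  have := FiniteDimensional.complete ℚ_[p] K
  have hp : 1 < (p : ℝ) := by exact_mod_cast (Fact.out : p.Prime).one_lt
  have hpK : ‖(p : K)‖ = (p : ℝ)⁻¹ := by simpa using hnorm p
  rw [← Nat.totient_prime_pow_eq_sub Fact.out hn] at hlam ⊢
  have hq0 : 0 < (p ^ n).totient := Nat.totient_pos.mpr (pow_pos (Fact.out : p.Prime).pos n)
  have hr := hζ.norm_sub_one_eq_rpow Fact.out (by omega) hpK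
  have hr1 : ‖ζ - 1‖ < 1 := hr ▸ Real.rpow_lt_one_of_one_lt_of_neg hp (by simpa using hq0)
  have hu1 : ‖algebraMap ℚ_[p] K ((1 + 2 * p * t : ℤ_[p]) : ℚ_[p]) - 1‖ < ‖ζ - 1‖ := by
    refine lt_of_pow_lt_pow_left₀ (p ^ n).totient (norm_nonneg _) ?_
    rw [hζ.norm_sub_one_pow_totient Fact.out (by omega), hpK, ← map_one (algebraMap ℚ_[p] K),
      ← map_sub, hnorm]
    exact PadicInt.norm_coe_one_add_two_mul_sub_one_pow_totient_lt t (by omega)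
  have hx := IsUltrametricDist.norm_mul_sub_one_eq hu1 hr1.le
  have hϖx : ‖ϖ‖ < ‖ζ - 1‖ ^ lam := by
    rw [hr, ← Real.rpow_mul_natCast (by positivity), hϖ, Real.rpow_lt_rpow_left_iff hp,
      neg_mul, neg_lt_neg_iff, inv_mul_eq_div, div_lt_div_iff₀ (by positivity) (by positivity)]
    linarith [(lt_div_iff₀ (by positivity : (0 : ℝ) < e)).mp hlam]
  change ‖F.tsumEval _‖ = _
  rw [← hx] at hr1 hϖx
  rw [hF, norm_tsumEval_C_mul_X_pow_add_C_mul_mul hF0int hUint hUunit hr1 hϖx, norm_zpow, hpK, hx,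
    hr, ← Real.rpow_mul_natCast (by positivity), inv_zpow', ← Real.rpow_intCast,
    ← Real.rpow_add (by positivity)]
  push_cast
  ring_nf

/-- Let `K/ℚ_p` be finite (norm extending the `p`-adic norm), with ramification index
`e` and uniformizer `ϖ` (`‖ϖ‖ = p^{-1/e}`).  Let `F = p^μ (T^λ + ϖ F₀) U` be a
Weierstrass decomposition: `F₀ ∈ O_K[T]` of degree `< λ` and `U ∈ O_K[[T]]ˣ`.  If `ζ` is
a primitive `p^n`-th root of unity with `λ < (p^n - p^{n-1})/e`, and `u ∈ 1 + 2pℤ_p`,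
then `ord_p(F(uζ - 1)) = μ + λ/(p^n - p^{n-1})`, i.e.
`‖F(uζ - 1)‖ = p^{-(μ + λ/(p^n - p^{n-1}))}`. -/
theorem stmt_17 (p n : ℕ) [Fact p.Prime] (hn : 1 ≤ n)
    (K : Type) [NormedField K] [Algebra ℚ_[p] K] [FiniteDimensional ℚ_[p] K]
    (hnorm : ∀ x : ℚ_[p], ‖algebraMap ℚ_[p] K x‖ = ‖x‖)
    (e : ℕ) (he : 0 < e)
    (ϖ : K) (hϖ : ‖ϖ‖ = (p : ℝ) ^ (-(1 / (e : ℝ))))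
    (μ : ℤ) (lam : ℕ)
    (F0 : PowerSeries K)
    (hF0int : ∀ j, ‖PowerSeries.coeff (R := K) j F0‖ ≤ 1)
    (hF0deg : ∀ j, lam ≤ j → PowerSeries.coeff (R := K) j F0 = 0)
    (U : PowerSeries K)
    (hUint : ∀ j, ‖PowerSeries.coeff (R := K) j U‖ ≤ 1)
    (hUunit : ‖PowerSeries.coeff (R := K) 0 U‖ = 1)
    (F : PowerSeries K)
    (hF : F = PowerSeries.C (R := K) ((p : K) ^ μ) *
      (PowerSeries.X ^ lam + PowerSeries.C (R := K) ϖ * F0) * U)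
    (ζ : K) (hζ : IsPrimitiveRoot ζ (p ^ n))
    (hlam : (lam : ℝ) < ((p ^ n - p ^ (n - 1) : ℕ) : ℝ) / (e : ℝ))
    (u : ℤ_[p]) (hu : ∃ t : ℤ_[p], u = 1 + 2 * p * t) :
    ‖∑' j : ℕ, PowerSeries.coeff (R := K) j F *
        (algebraMap ℚ_[p] K (u : ℚ_[p]) * ζ - 1) ^ j‖ =
      (p : ℝ) ^ (-((μ : ℝ) + (lam : ℝ) / ((p ^ n - p ^ (n - 1) : ℕ) : ℝ))) :=
  stmt_17_general p n hn K hnorm e he ϖ hϖ μ lam F0 hF0int U hUint hUunit F hF ζ hζ hlam u hu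
end
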